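/- Let K be a field with char K ≠ 2 and let F = K(X,Y,Z) be the field of rational functions in three variables over K. If λ₀, λ₁, λ₂, λ₃, λ₄, λ₅, λ₆, λ₇ ∈ F satisfy λ₀² − λ₁²·X − λ₂²·Y − λ₃²·Z + λ₄²·X·Y + λ₅²·Y·Z + λ₆²·Z·X − λ₇²·X·Y·Z = 0, then λ₀ = λ₁ = λ₂ = λ₃ = λ₄ = λ₅ = λ₆ = λ₇ = 0. Consequently the Cayley algebra 𝒪_F(X,Y,Z) over F has no zero divisors. -/
import Mathlib


open Module Submodule

namespace CayleyQFano

variable (F : Type*) [Field F]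

/-- The underlying vector space of the Cayley algebra `𝒪_F(α,β,γ) = D_γ(D_β(D_α(F)))`:
three iterated Cayley–Dickson doublings of `F`. -/
abbrev Oct := ((F × F) × (F × F)) × ((F × F) × (F × F))

/-- The unit element of the Cayley algebra. -/
def octOne : Oct F := (((1, 0), (0, 0)), ((0, 0), (0, 0)))

variable {F}

/-- The involution of `D_α(F)` (the identity involution on `F`, doubled). -/
def conj1 (a : F × F) : F × F := (a.1, -a.2)

/-- The involution of `D_β(D_α(F))`. -/
def conj2 (a : (F × F) × (F × F)) : (F × F) × (F × F) := (conj1 a.1, -a.2)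

/-- The involution `x ↦ x*` of the Cayley algebra. -/
def octConj (x : Oct F) : Oct F := (conj2 x.1, -x.2)

/-- The multiplication of `D_α(F)`: `(a,b)·(c,d) = (ac + α·d·b*, a*·d + c·b)`
with the identity involution on `F`. -/
def mul1 (α : F) (x y : F × F) : F × F :=
  (x.1 * y.1 + α * (y.2 * x.2), x.1 * y.2 + y.1 * x.2)

/-- The multiplication of `D_β(D_α(F))`. -/
def mul2 (α β : F) (x y : (F × F) × (F × F)) : (F × F) × (F × F) :=
  (mul1 α x.1 y.1 + β • mul1 α y.2 (conj1 x.2),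
   mul1 α (conj1 x.1) y.2 + mul1 α y.1 x.2)

/-- The multiplication of the Cayley algebra `𝒪_F(α,β,γ) = D_γ(D_β(D_α(F)))`. -/
def octMul (α β γ : F) (x y : Oct F) : Oct F :=
  (mul2 α β x.1 y.1 + γ • mul2 α β y.2 (conj2 x.2),
   mul2 α β (conj2 x.1) y.2 + mul2 α β y.1 x.2)

/-- The space `Im 𝒪 = {x : x* = -x}` of imaginary elements, as an `F`-subspace. -/
def octIm (F : Type*) [Field F] : Submodule F (Oct F) where
  carrier := {x | octConj x = -x}
  add_mem' := by
    intro a b ha hb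
    simp only [Set.mem_setOf_eq] at *
    have h : octConj (a + b) = octConj a + octConj b := by
      simp [octConj, conj2, conj1, Prod.ext_iff, neg_add, add_comm]
    rw [h, ha, hb, neg_add]
  zero_mem' := by
    simp [Set.mem_setOf_eq, octConj, conj2, conj1, Prod.ext_iff]
  smul_mem' := by
    intro c x hx
    simp only [Set.mem_setOf_eq] at *
    have h : octConj (c • x) = c • octConj x := by
      simp [octConj, conj2, conj1, Prod.ext_iff, smul_neg]
    rw [h, hx, smul_neg]

/-- `H` is a (unital, not necessarily associative) subalgebra of the Cayley algebra:
an `F`-subspace containing `1` and closed under multiplication. -/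
def IsSubalg (α β γ : F) (H : Submodule F (Oct F)) : Prop :=
  octOne F ∈ H ∧ ∀ x ∈ H, ∀ y ∈ H, octMul α β γ x y ∈ H

/-- A subset of the Cayley algebra is associative if `(x·y)·z = x·(y·z)` holds
for all its elements. -/
def IsAssocOn (α β γ : F) (s : Set (Oct F)) : Prop :=
  ∀ x ∈ s, ∀ y ∈ s, ∀ z ∈ s,
    octMul α β γ (octMul α β γ x y) z = octMul α β γ x (octMul α β γ y z)

/-- The subalgebra generated by a set: the smallest subalgebra containing it. -/
def adjoin (α β γ : F) (s : Set (Oct F)) : Submodule F (Oct F) :=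
  sInf {H : Submodule F (Oct F) | IsSubalg α β γ H ∧ s ⊆ (H : Set (Oct F))}

/-- The Cayley algebra `𝒪_F(α,β,γ)` has no zero divisors. -/
def HasNoZeroDiv (α β γ : F) : Prop :=
  ∀ x y : Oct F, octMul α β γ x y = 0 → x = 0 ∨ y = 0



/-- The norm of the Cayley algebra `𝒪_F(α,β,γ)`. -/
def octNorm (α β γ : F) (y : Oct F) : F :=
  y.1.1.1 ^ 2 - α * y.1.1.2 ^ 2 - β * y.1.2.1 ^ 2 + α * β * y.1.2.2 ^ 2
    - γ * y.2.1.1 ^ 2 + γ * α * y.2.1.2 ^ 2 + γ * β * y.2.2.1 ^ 2 - γ * α * β * y.2.2.2 ^ 2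

lemma octMul_octMul_octConj (α β γ : F) (x y : Oct F) :
    octMul α β γ (octMul α β γ x y) (octConj y) = octNorm α β γ y • x := by
  obtain ⟨⟨⟨a, b⟩, ⟨c, d⟩⟩, ⟨⟨e, f⟩, ⟨g, h⟩⟩⟩ := x
  obtain ⟨⟨⟨a', b'⟩, ⟨c', d'⟩⟩, ⟨⟨e', f'⟩, ⟨g', h'⟩⟩⟩ := y
  simp only [octMul, mul2, mul1, conj1, conj2, octConj, octNorm, Prod.mk.injEq,
    Prod.smul_mk, Prod.mk_add_mk, Prod.neg_mk, smul_eq_mul]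
  refine ⟨⟨⟨?_, ?_⟩, ?_, ?_⟩, ⟨?_, ?_⟩, ?_, ?_⟩ <;> ring

lemma octMul_zero_left (α β γ : F) (y : Oct F) : octMul α β γ 0 y = 0 := by
  obtain ⟨⟨⟨a, b⟩, ⟨c, d⟩⟩, ⟨⟨e, f⟩, ⟨g, h⟩⟩⟩ := y
  show octMul α β γ ((((0 : F), (0 : F)), ((0 : F), (0 : F))),
      (((0 : F), (0 : F)), ((0 : F), (0 : F)))) _
    = ((((0 : F), (0 : F)), ((0 : F), (0 : F))), (((0 : F), (0 : F)), ((0 : F), (0 : F))))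
  simp only [octMul, mul2, mul1, conj1, conj2, Prod.mk.injEq,
    Prod.smul_mk, Prod.mk_add_mk, Prod.neg_mk, smul_eq_mul]
  refine ⟨⟨⟨?_, ?_⟩, ?_, ?_⟩, ⟨?_, ?_⟩, ?_, ?_⟩ <;> ring

section PolyAux

open MvPolynomial

variable {K : Type*} [Field K]


noncomputable def sub0 (K : Type*) [Field K] (j : Fin 3) : Fin 3 → MvPolynomial (Fin 3) K :=
  fun i => if i = j then 0 else X i

@[simp] lemma aeval_sub0_self (j : Fin 3) :
    aeval (sub0 K j) (X j : MvPolynomial (Fin 3) K) = 0 := by simp [sub0]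

lemma aeval_sub0_eq_self {j : Fin 3} {p : MvPolynomial (Fin 3) K}
    (h : ∀ m ∈ p.support, m j = 0) : aeval (sub0 K j) p = p := by
  have step : ∀ m ∈ p.support,
      aeval (sub0 K j) (monomial m (coeff m p)) = monomial m (coeff m p) := by
    intro m hm
    rw [aeval_monomial, monomial_eq, algebraMap_eq]
    congr 1
    apply Finsupp.prod_congr
    intro i hi
    have hij : i ≠ j := by
      rintro rfl
      exact absurd (h m hm) (Finsupp.mem_support_iff.mp hi)
    simp [sub0, hij]
  calc aeval (sub0 K j) p
      = ∑ m ∈ p.support, aeval (sub0 K j) (monomial m (coeff m p)) := by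
        conv_lhs => rw [p.as_sum]
        rw [map_sum]
    _ = ∑ m ∈ p.support, monomial m (coeff m p) := Finset.sum_congr rfl step
    _ = p := (p.as_sum).symm

lemma X_dvd_of_aeval {j : Fin 3} {p : MvPolynomial (Fin 3) K}
    (h : aeval (sub0 K j) p = 0) : X j ∣ p := by
  rw [X_dvd_iff_modMonomial_eq_zero]
  have hsup : ∀ m ∈ (p.modMonomial (Finsupp.single j 1)).support, m j = 0 := by
    intro m hm
    by_contra hmj
    have hle : Finsupp.single j 1 ≤ m := Finsupp.single_le_iff.mpr (by omega)
    exact (Finsupp.mem_support_iff.mp hm) (coeff_modMonomial_of_le p hle)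
  have hr : aeval (sub0 K j) (p.modMonomial (Finsupp.single j 1))
      = p.modMonomial (Finsupp.single j 1) := aeval_sub0_eq_self hsup
  have hdecomp := divMonomial_add_modMonomial_single p j
  have h2 := congrArg (aeval (sub0 K j)) hdecomp
  rw [map_add, map_mul, aeval_sub0_self, zero_mul, zero_add, hr, h] at h2
  exact h2

lemma degreeOf_X_mul_lt (j : Fin 3) (q : MvPolynomial (Fin 3) K) (h : q ≠ 0) :
    degreeOf j q < degreeOf j (X j * q) := by
  rw [mul_comm, (degreeOf_mul_X_eq_degreeOf_add_one_iff j q).mpr h]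
  omega

lemma degreeOf_X_mul_le (j : Fin 3) (q : MvPolynomial (Fin 3) K) :
    degreeOf j q ≤ degreeOf j (X j * q) := by
  rcases eq_or_ne q 0 with rfl | h
  · simp
  · exact (degreeOf_X_mul_lt j q h).le

lemma sq_eq_zero' {p : MvPolynomial (Fin 3) K} (h : p ^ 2 = 0) : p = 0 :=
  pow_eq_zero_iff (n := 2) (by norm_num) |>.mp h

lemma P1 : ∀ a b : MvPolynomial (Fin 3) K, a ^ 2 = X 0 * b ^ 2 → a = 0 ∧ b = 0 := by
  suffices H : ∀ n, ∀ a b : MvPolynomial (Fin 3) K, degreeOf 0 a = n →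
      a ^ 2 = X 0 * b ^ 2 → a = 0 ∧ b = 0 by
    intro a b h; exact H _ a b rfl h
  intro n
  induction n using Nat.strong_induction_on with
  | _ n ih =>
    intro a b hdeg h
    by_cases ha : a = 0
    · subst ha
      refine ⟨rfl, ?_⟩
      have h0 : X (0 : Fin 3) * b ^ 2 = 0 := by linear_combination -h
      rcases mul_eq_zero.mp h0 with h1 | h1
      · exact absurd h1 (X_ne_zero 0)
      · exact sq_eq_zero' h1
    · exfalso
      have hXa : X (0 : Fin 3) ∣ a := by
        apply X_dvd_of_aeval
        have hφ := congrArg (aeval (sub0 K 0)) h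
        simp only [map_mul, map_pow, aeval_sub0_self, zero_mul] at hφ
        exact sq_eq_zero' hφ
      obtain ⟨a₁, rfl⟩ := hXa
      have ha₁ : a₁ ≠ 0 := fun h' => ha (by simp [h'])
      have h2 : b ^ 2 = X 0 * a₁ ^ 2 :=
        mul_left_cancel₀ (X_ne_zero (0 : Fin 3)) (by linear_combination -h)
      have hXb : X (0 : Fin 3) ∣ b := by
        apply X_dvd_of_aeval
        have hφ := congrArg (aeval (sub0 K 0)) h2
        simp only [map_mul, map_pow, aeval_sub0_self, zero_mul] at hφ
        exact sq_eq_zero' hφ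
      obtain ⟨b₁, rfl⟩ := hXb
      have h3 : a₁ ^ 2 = X 0 * b₁ ^ 2 :=
        mul_left_cancel₀ (X_ne_zero (0 : Fin 3)) (by linear_combination -h2)
      exact ha₁ (ih _ (hdeg ▸ degreeOf_X_mul_lt 0 a₁ ha₁) a₁ b₁ rfl h3).1

lemma aeval_sub0_ne {i j : Fin 3} (h : i ≠ j) :
    aeval (sub0 K j) (X i : MvPolynomial (Fin 3) K) = X i := by simp [sub0, h]

lemma P2 : ∀ a b c d : MvPolynomial (Fin 3) K,
    a ^ 2 - X 0 * b ^ 2 - X 1 * c ^ 2 + X 0 * X 1 * d ^ 2 = 0 →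
    a = 0 ∧ b = 0 ∧ c = 0 ∧ d = 0 := by
  suffices H : ∀ n, ∀ a b c d : MvPolynomial (Fin 3) K,
      degreeOf 1 a + degreeOf 1 b + degreeOf 1 c + degreeOf 1 d = n →
      a ^ 2 - X 0 * b ^ 2 - X 1 * c ^ 2 + X 0 * X 1 * d ^ 2 = 0 →
      a = 0 ∧ b = 0 ∧ c = 0 ∧ d = 0 by
    intro a b c d h; exact H _ a b c d rfl h
  intro n
  induction n using Nat.strong_induction_on with
  | _ n ih =>
    intro a b c d hdeg h
    by_cases h0 : a = 0 ∧ b = 0 ∧ c = 0 ∧ d = 0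
    · exact h0
    have hab : aeval (sub0 K 1) a ^ 2 = X 0 * aeval (sub0 K 1) b ^ 2 := by
      have hφ := congrArg (aeval (sub0 K 1)) h
      simp only [map_add, map_sub, map_mul, map_pow, map_zero,
        aeval_sub0_self, aeval_sub0_ne (show (0 : Fin 3) ≠ 1 by decide)] at hφ
      linear_combination hφ
    obtain ⟨ha0, hb0⟩ := P1 _ _ hab
    obtain ⟨a₁, rfl⟩ := X_dvd_of_aeval ha0
    obtain ⟨b₁, rfl⟩ := X_dvd_of_aeval hb0
    have h2 : X 1 * a₁ ^ 2 - X 0 * X 1 * b₁ ^ 2 - c ^ 2 + X 0 * d ^ 2 = 0 :=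
      mul_left_cancel₀ (X_ne_zero (1 : Fin 3))
        (show X (1:Fin 3) * (X 1 * a₁ ^ 2 - X 0 * X 1 * b₁ ^ 2 - c ^ 2 + X 0 * d ^ 2) = X 1 * 0 by
          linear_combination h)
    have hcd : aeval (sub0 K 1) c ^ 2 = X 0 * aeval (sub0 K 1) d ^ 2 := by
      have hφ := congrArg (aeval (sub0 K 1)) h2
      simp only [map_add, map_sub, map_mul, map_pow, map_zero,
        aeval_sub0_self, aeval_sub0_ne (show (0 : Fin 3) ≠ 1 by decide)] at hφ
      linear_combination -hφ
    obtain ⟨hc0, hd0⟩ := P1 _ _ hcd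
    obtain ⟨c₁, rfl⟩ := X_dvd_of_aeval hc0
    obtain ⟨d₁, rfl⟩ := X_dvd_of_aeval hd0
    have h3 : a₁ ^ 2 - X 0 * b₁ ^ 2 - X 1 * c₁ ^ 2 + X 0 * X 1 * d₁ ^ 2 = 0 :=
      mul_left_cancel₀ (X_ne_zero (1 : Fin 3))
        (show X (1:Fin 3) * (a₁ ^ 2 - X 0 * b₁ ^ 2 - X 1 * c₁ ^ 2 + X 0 * X 1 * d₁ ^ 2) = X 1 * 0 by
          linear_combination h2)
    have hne : a₁ ≠ 0 ∨ b₁ ≠ 0 ∨ c₁ ≠ 0 ∨ d₁ ≠ 0 := by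
      by_contra hq
      push_neg at hq
      obtain ⟨e1, e2, e3, e4⟩ := hq
      exact h0 ⟨by simp [e1], by simp [e2], by simp [e3], by simp [e4]⟩
    have l1 := degreeOf_X_mul_le (K := K) 1 a₁
    have l2 := degreeOf_X_mul_le (K := K) 1 b₁
    have l3 := degreeOf_X_mul_le (K := K) 1 c₁
    have l4 := degreeOf_X_mul_le (K := K) 1 d₁
    have hlt : degreeOf 1 a₁ + degreeOf 1 b₁ + degreeOf 1 c₁ + degreeOf 1 d₁ < n := by
      rcases hne with hq | hq | hq | hq
      · have := degreeOf_X_mul_lt 1 a₁ hq; omega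
      · have := degreeOf_X_mul_lt 1 b₁ hq; omega
      · have := degreeOf_X_mul_lt 1 c₁ hq; omega
      · have := degreeOf_X_mul_lt 1 d₁ hq; omega
    obtain ⟨ea, eb, ec, ed⟩ := ih _ hlt a₁ b₁ c₁ d₁ rfl h3
    exact ⟨by simp [ea], by simp [eb], by simp [ec], by simp [ed]⟩

lemma P3 : ∀ p0 p1 p2 p3 p4 p5 p6 p7 : MvPolynomial (Fin 3) K,
    p0 ^ 2 - X 0 * p1 ^ 2 - X 1 * p2 ^ 2 - X 2 * p3 ^ 2 + X 0 * X 1 * p4 ^ 2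
      + X 1 * X 2 * p5 ^ 2 + X 2 * X 0 * p6 ^ 2 - X 0 * X 1 * X 2 * p7 ^ 2 = 0 →
    p0 = 0 ∧ p1 = 0 ∧ p2 = 0 ∧ p3 = 0 ∧ p4 = 0 ∧ p5 = 0 ∧ p6 = 0 ∧ p7 = 0 := by
  suffices H : ∀ n, ∀ p0 p1 p2 p3 p4 p5 p6 p7 : MvPolynomial (Fin 3) K,
      degreeOf 2 p0 + degreeOf 2 p1 + degreeOf 2 p2 + degreeOf 2 p3 + degreeOf 2 p4
        + degreeOf 2 p5 + degreeOf 2 p6 + degreeOf 2 p7 = n →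
      p0 ^ 2 - X 0 * p1 ^ 2 - X 1 * p2 ^ 2 - X 2 * p3 ^ 2 + X 0 * X 1 * p4 ^ 2
        + X 1 * X 2 * p5 ^ 2 + X 2 * X 0 * p6 ^ 2 - X 0 * X 1 * X 2 * p7 ^ 2 = 0 →
      p0 = 0 ∧ p1 = 0 ∧ p2 = 0 ∧ p3 = 0 ∧ p4 = 0 ∧ p5 = 0 ∧ p6 = 0 ∧ p7 = 0 by
    intro p0 p1 p2 p3 p4 p5 p6 p7 h; exact H _ p0 p1 p2 p3 p4 p5 p6 p7 rfl h
  intro n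
  induction n using Nat.strong_induction_on with
  | _ n ih =>
    intro p0 p1 p2 p3 p4 p5 p6 p7 hdeg h
    by_cases h0 : p0 = 0 ∧ p1 = 0 ∧ p2 = 0 ∧ p3 = 0 ∧ p4 = 0 ∧ p5 = 0 ∧ p6 = 0 ∧ p7 = 0
    · exact h0
    have hq1 : aeval (sub0 K 2) p0 ^ 2 - X 0 * aeval (sub0 K 2) p1 ^ 2
        - X 1 * aeval (sub0 K 2) p2 ^ 2 + X 0 * X 1 * aeval (sub0 K 2) p4 ^ 2 = 0 := by
      have hφ := congrArg (aeval (sub0 K 2)) h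
      simp only [map_add, map_sub, map_mul, map_pow, map_zero, aeval_sub0_self,
        aeval_sub0_ne (show (0 : Fin 3) ≠ 2 by decide),
        aeval_sub0_ne (show (1 : Fin 3) ≠ 2 by decide)] at hφ
      linear_combination hφ
    obtain ⟨e0, e1, e2, e4⟩ := P2 _ _ _ _ hq1
    obtain ⟨r0, rfl⟩ := X_dvd_of_aeval e0
    obtain ⟨r1, rfl⟩ := X_dvd_of_aeval e1
    obtain ⟨r2, rfl⟩ := X_dvd_of_aeval e2
    obtain ⟨r4, rfl⟩ := X_dvd_of_aeval e4
    have h2 : X 2 * r0 ^ 2 - X 0 * X 2 * r1 ^ 2 - X 1 * X 2 * r2 ^ 2 - p3 ^ 2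
        + X 0 * X 1 * X 2 * r4 ^ 2 + X 1 * p5 ^ 2 + X 0 * p6 ^ 2 - X 0 * X 1 * p7 ^ 2 = 0 :=
      mul_left_cancel₀ (X_ne_zero (2 : Fin 3))
        (show X (2:Fin 3) * (X 2 * r0 ^ 2 - X 0 * X 2 * r1 ^ 2 - X 1 * X 2 * r2 ^ 2 - p3 ^ 2
            + X 0 * X 1 * X 2 * r4 ^ 2 + X 1 * p5 ^ 2 + X 0 * p6 ^ 2 - X 0 * X 1 * p7 ^ 2)
          = X 2 * 0 by linear_combination h)
    have hq2 : aeval (sub0 K 2) p3 ^ 2 - X 0 * aeval (sub0 K 2) p6 ^ 2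
        - X 1 * aeval (sub0 K 2) p5 ^ 2 + X 0 * X 1 * aeval (sub0 K 2) p7 ^ 2 = 0 := by
      have hφ := congrArg (aeval (sub0 K 2)) h2
      simp only [map_add, map_sub, map_mul, map_pow, map_zero, aeval_sub0_self,
        aeval_sub0_ne (show (0 : Fin 3) ≠ 2 by decide),
        aeval_sub0_ne (show (1 : Fin 3) ≠ 2 by decide)] at hφ
      linear_combination -hφ
    obtain ⟨e3, e6, e5, e7⟩ := P2 _ _ _ _ hq2
    obtain ⟨r3, rfl⟩ := X_dvd_of_aeval e3
    obtain ⟨r5, rfl⟩ := X_dvd_of_aeval e5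
    obtain ⟨r6, rfl⟩ := X_dvd_of_aeval e6
    obtain ⟨r7, rfl⟩ := X_dvd_of_aeval e7
    have h3 : r0 ^ 2 - X 0 * r1 ^ 2 - X 1 * r2 ^ 2 - X 2 * r3 ^ 2 + X 0 * X 1 * r4 ^ 2
        + X 1 * X 2 * r5 ^ 2 + X 2 * X 0 * r6 ^ 2 - X 0 * X 1 * X 2 * r7 ^ 2 = 0 :=
      mul_left_cancel₀ (X_ne_zero (2 : Fin 3))
        (show X (2:Fin 3) * (r0 ^ 2 - X 0 * r1 ^ 2 - X 1 * r2 ^ 2 - X 2 * r3 ^ 2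
            + X 0 * X 1 * r4 ^ 2 + X 1 * X 2 * r5 ^ 2 + X 2 * X 0 * r6 ^ 2
            - X 0 * X 1 * X 2 * r7 ^ 2) = X 2 * 0 by linear_combination h2)
    have hne : r0 ≠ 0 ∨ r1 ≠ 0 ∨ r2 ≠ 0 ∨ r3 ≠ 0 ∨ r4 ≠ 0 ∨ r5 ≠ 0 ∨ r6 ≠ 0 ∨ r7 ≠ 0 := by
      by_contra hq
      push_neg at hq
      obtain ⟨f0, f1, f2, f3, f4, f5, f6, f7⟩ := hq
      exact h0 ⟨by simp [f0], by simp [f1], by simp [f2], by simp [f3],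
        by simp [f4], by simp [f5], by simp [f6], by simp [f7]⟩
    have l0 := degreeOf_X_mul_le (K := K) 2 r0
    have l1 := degreeOf_X_mul_le (K := K) 2 r1
    have l2 := degreeOf_X_mul_le (K := K) 2 r2
    have l3 := degreeOf_X_mul_le (K := K) 2 r3
    have l4 := degreeOf_X_mul_le (K := K) 2 r4
    have l5 := degreeOf_X_mul_le (K := K) 2 r5
    have l6 := degreeOf_X_mul_le (K := K) 2 r6
    have l7 := degreeOf_X_mul_le (K := K) 2 r7
    have hlt : degreeOf 2 r0 + degreeOf 2 r1 + degreeOf 2 r2 + degreeOf 2 r3 + degreeOf 2 r4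
        + degreeOf 2 r5 + degreeOf 2 r6 + degreeOf 2 r7 < n := by
      rcases hne with hq | hq | hq | hq | hq | hq | hq | hq
      · have := degreeOf_X_mul_lt 2 r0 hq; omega
      · have := degreeOf_X_mul_lt 2 r1 hq; omega
      · have := degreeOf_X_mul_lt 2 r2 hq; omega
      · have := degreeOf_X_mul_lt 2 r3 hq; omega
      · have := degreeOf_X_mul_lt 2 r4 hq; omega
      · have := degreeOf_X_mul_lt 2 r5 hq; omega
      · have := degreeOf_X_mul_lt 2 r6 hq; omega
      · have := degreeOf_X_mul_lt 2 r7 hq; omega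
    obtain ⟨g0, g1, g2, g3, g4, g5, g6, g7⟩ := ih _ hlt r0 r1 r2 r3 r4 r5 r6 r7 rfl h3
    exact ⟨by simp [g0], by simp [g1], by simp [g2], by simp [g3],
      by simp [g4], by simp [g5], by simp [g6], by simp [g7]⟩

end PolyAux

/-- The images of the three variables in the rational function field `K(X,Y,Z)`. -/
noncomputable def Xv (K : Type*) [Field K] (i : Fin 3) :
    FractionRing (MvPolynomial (Fin 3) K) :=
  algebraMap (MvPolynomial (Fin 3) K) (FractionRing (MvPolynomial (Fin 3) K))
    (MvPolynomial.X i)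

set_option maxHeartbeats 2000000
set_option synthInstance.maxHeartbeats 1000000

/-- Over `F = K(X,Y,Z)` with `char K ≠ 2`, the norm form of the Cayley algebra
`𝒪_F(X,Y,Z)` is anisotropic, and consequently `𝒪_F(X,Y,Z)` has no zero divisors. -/
theorem functionField_anisotropic (K : Type*) [Field K] (h2 : (2 : K) ≠ 0) :
    (∀ l : Fin 8 → FractionRing (MvPolynomial (Fin 3) K),
      l 0 ^ 2 - l 1 ^ 2 * Xv K 0 - l 2 ^ 2 * Xv K 1 - l 3 ^ 2 * Xv K 2
          + l 4 ^ 2 * (Xv K 0 * Xv K 1) + l 5 ^ 2 * (Xv K 1 * Xv K 2)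
          + l 6 ^ 2 * (Xv K 2 * Xv K 0) - l 7 ^ 2 * (Xv K 0 * Xv K 1 * Xv K 2) = 0 →
      ∀ i, l i = 0) ∧
    HasNoZeroDiv (Xv K 0) (Xv K 1) (Xv K 2) := by
  classical
  have part1 : ∀ l : Fin 8 → FractionRing (MvPolynomial (Fin 3) K),
      l 0 ^ 2 - l 1 ^ 2 * Xv K 0 - l 2 ^ 2 * Xv K 1 - l 3 ^ 2 * Xv K 2
          + l 4 ^ 2 * (Xv K 0 * Xv K 1) + l 5 ^ 2 * (Xv K 1 * Xv K 2)
          + l 6 ^ 2 * (Xv K 2 * Xv K 0) - l 7 ^ 2 * (Xv K 0 * Xv K 1 * Xv K 2) = 0 →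
      ∀ i, l i = 0 := by
    intro l hl
    obtain ⟨b, hb⟩ := IsLocalization.exist_integer_multiples
      (nonZeroDivisors (MvPolynomial (Fin 3) K)) Finset.univ l
    choose p hp using fun i : Fin 8 => hb i (Finset.mem_univ i)
    have hA : Function.Injective (algebraMap (MvPolynomial (Fin 3) K)
        (FractionRing (MvPolynomial (Fin 3) K))) := IsFractionRing.injective _ _
    have hbl : ∀ i, algebraMap (MvPolynomial (Fin 3) K)
          (FractionRing (MvPolynomial (Fin 3) K)) (p i)
        = algebraMap (MvPolynomial (Fin 3) K) (FractionRing (MvPolynomial (Fin 3) K))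
            (b : MvPolynomial (Fin 3) K) * l i := fun i => by
      rw [hp i, Algebra.smul_def]
    simp only [Xv] at hl
    have key : algebraMap (MvPolynomial (Fin 3) K) (FractionRing (MvPolynomial (Fin 3) K))
        (p 0 ^ 2 - MvPolynomial.X 0 * p 1 ^ 2 - MvPolynomial.X 1 * p 2 ^ 2
          - MvPolynomial.X 2 * p 3 ^ 2 + MvPolynomial.X 0 * MvPolynomial.X 1 * p 4 ^ 2
          + MvPolynomial.X 1 * MvPolynomial.X 2 * p 5 ^ 2
          + MvPolynomial.X 2 * MvPolynomial.X 0 * p 6 ^ 2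
          - MvPolynomial.X 0 * MvPolynomial.X 1 * MvPolynomial.X 2 * p 7 ^ 2) = 0 := by
      simp only [map_add, map_sub, map_mul, map_pow, hbl]
      linear_combination (algebraMap (MvPolynomial (Fin 3) K)
        (FractionRing (MvPolynomial (Fin 3) K)) (b : MvPolynomial (Fin 3) K)) ^ 2 * hl
    have hE := hA (key.trans (map_zero _).symm)
    obtain ⟨q0, q1, q2, q3, q4, q5, q6, q7⟩ := P3 _ _ _ _ _ _ _ _ hE
    have hbne : algebraMap (MvPolynomial (Fin 3) K) (FractionRing (MvPolynomial (Fin 3) K))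
        (b : MvPolynomial (Fin 3) K) ≠ 0 := by
      intro hzero
      exact nonZeroDivisors.coe_ne_zero b (hA (hzero.trans (map_zero _).symm))
    intro i
    have hpz : p i = 0 := by
      fin_cases i
      · exact q0
      · exact q1
      · exact q2
      · exact q3
      · exact q4
      · exact q5
      · exact q6
      · exact q7
    have hmul := hbl i
    rw [hpz, map_zero] at hmul
    exact (mul_eq_zero.mp hmul.symm).resolve_left hbne
  refine ⟨part1, ?_⟩
  intro x y hxy
  by_cases hx : x = 0
  · exact Or.inl hx
  · right
    have h1 : octNorm (Xv K 0) (Xv K 1) (Xv K 2) y • x = 0 := by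
      rw [← octMul_octMul_octConj (Xv K 0) (Xv K 1) (Xv K 2) x y, hxy, octMul_zero_left]
    by_cases hN : octNorm (Xv K 0) (Xv K 1) (Xv K 2) y = 0
    · obtain ⟨⟨⟨a1, a2⟩, ⟨a3, a4⟩⟩, ⟨⟨a5, a6⟩, ⟨a7, a8⟩⟩⟩ := y
      have hz := part1 ![a1, a2, a3, a5, a4, a7, a6, a8] ?_
      · have e1 : a1 = 0 := hz 0
        have e2 : a2 = 0 := hz 1
        have e3 : a3 = 0 := hz 2
        have e5 : a5 = 0 := hz 3
        have e4 : a4 = 0 := hz 4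
        have e7 : a7 = 0 := hz 5
        have e6 : a6 = 0 := hz 6
        have e8 : a8 = 0 := hz 7
        subst e1; subst e2; subst e3; subst e4; subst e5; subst e6; subst e7; subst e8
        rfl
      · show a1 ^ 2 - a2 ^ 2 * Xv K 0 - a3 ^ 2 * Xv K 1 - a5 ^ 2 * Xv K 2
            + a4 ^ 2 * (Xv K 0 * Xv K 1) + a7 ^ 2 * (Xv K 1 * Xv K 2)
            + a6 ^ 2 * (Xv K 2 * Xv K 0) - a8 ^ 2 * (Xv K 0 * Xv K 1 * Xv K 2) = 0
        simp only [octNorm] at hN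
        linear_combination hN
    · exfalso
      apply hx
      have h2 := congrArg
        (fun v => (octNorm (Xv K 0) (Xv K 1) (Xv K 2) y)⁻¹ • v) h1
      simpa [smul_smul, inv_mul_cancel₀ hN] using h2

end CayleyQFano
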